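/- arXiv:1604.01745 — 2 statements merged into one kernel-verified Lean document; each statement's English description precedes it below -/
import Mathlib

section
/- Consider coupled dynamics x₁(t+1) = f₁(x₁(t), x₂(t), u₁), x₂(t+1) = f₂(x₁(t), x₂(t), u₂). Let R₁, R₂, and ε-inflated sets R₁^ε ⊇ R₁, R₂^ε ⊇ R₂ be given. Suppose patterns π₁ (length ℓ) and π₂ (length ℓ) and initial sets s₁ ⊆ R₁, s₂ ⊆ R₂ satisfy: the approximate sequences X^k_1 (with X⁰_1 = s₁, X^k_1 = f₁(X^{k-1}_1, R₂^ε, π₁(k))) and X^k_2 (with X⁰_2 = s₂, X^k_2 = f₂(R₁^ε, X^{k-1}_2, π₂(k))) satisfy X^k_1 ⊆ R₁^ε and X^k_2 ⊆ R₂^ε for 1 ≤ k ≤ ℓ−1, and X^ℓ_1 ⊆ R₁, X^ℓ_2 ⊆ R₂. Then for every (x₁, x₂) ∈ s₁ × s₂, the true joint trajectory under (π₁, π₂) satisfies: the first component lies in X^k_1 and the second in X^k_2 at every step k ≤ ℓ; in particular the final state lies in R₁ × R₂. -/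
/-!
Induction on the step `k`. While `k < ℓ`, each component of the true state lies in its
approximate set `X_k`, which is contained in the inflated set (for `k = 0` because
`s ⊆ R ⊆ R^ε`). So the partner component at step `k` is one of the points over which the
set-lifted map ranges, and the true update lands in `X_{k+1}`.
-/

section CoupledReach

variable {α β U₁ U₂ : Type*}

theorem subset_of_lt_of_subset_zero {X : ℕ → Set α} {R : Set α} {ℓ : ℕ} (h0 : X 0 ⊆ R)
    (hmid : ∀ k, 1 ≤ k → k ≤ ℓ - 1 → X k ⊆ R) : ∀ k < ℓ, X k ⊆ R := by
  rintro (_ | k) hk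
  · exact h0
  · exact hmid (k + 1) k.succ_pos (by omega)

theorem coupled_traj_mem_approx {f₁ : α → β → U₁ → α} {f₂ : α → β → U₂ → β}
    {R₁ε : Set α} {R₂ε : Set β} {π₁ : ℕ → U₁} {π₂ : ℕ → U₂}
    {X1 : ℕ → Set α} {X2 : ℕ → Set β} {ℓ : ℕ}
    (hX1k : ∀ k, X1 (k + 1) = {z | ∃ x ∈ X1 k, ∃ y ∈ R₂ε, z = f₁ x y (π₁ (k + 1))})
    (hX2k : ∀ k, X2 (k + 1) = {z | ∃ x ∈ R₁ε, ∃ y ∈ X2 k, z = f₂ x y (π₂ (k + 1))})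
    (hin1 : ∀ k < ℓ, X1 k ⊆ R₁ε) (hin2 : ∀ k < ℓ, X2 k ⊆ R₂ε)
    (traj : ℕ → α × β) (h0₁ : (traj 0).1 ∈ X1 0) (h0₂ : (traj 0).2 ∈ X2 0)
    (hstep : ∀ k, traj (k + 1) =
      (f₁ (traj k).1 (traj k).2 (π₁ (k + 1)), f₂ (traj k).1 (traj k).2 (π₂ (k + 1)))) :
    ∀ k ≤ ℓ, (traj k).1 ∈ X1 k ∧ (traj k).2 ∈ X2 k := by
  intro k
  induction k with
  | zero => exact fun _ => ⟨h0₁, h0₂⟩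
  | succ k ih =>
    intro hk
    obtain ⟨h1, h2⟩ := ih (Nat.le_of_succ_le hk)
    rw [hstep, hX1k, hX2k]
    exact ⟨⟨_, h1, _, hin2 k hk h2, rfl⟩, ⟨_, hin1 k hk h1, _, h2, rfl⟩⟩

end CoupledReach

theorem stmt8_general {n₁ n₂ : ℕ} {U₁ U₂ : Type*}
    (f₁ : (Fin n₁ → ℝ) → (Fin n₂ → ℝ) → U₁ → (Fin n₁ → ℝ))
    (f₂ : (Fin n₁ → ℝ) → (Fin n₂ → ℝ) → U₂ → (Fin n₂ → ℝ))
    (R₁ R₁ε s₁ : Set (Fin n₁ → ℝ)) (R₂ R₂ε s₂ : Set (Fin n₂ → ℝ))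
    (hR₁ : R₁ ⊆ R₁ε) (hR₂ : R₂ ⊆ R₂ε)
    (hs₁ : s₁ ⊆ R₁) (hs₂ : s₂ ⊆ R₂)
    (π₁ : ℕ → U₁) (π₂ : ℕ → U₂) (ℓ : ℕ)
    (X1 : ℕ → Set (Fin n₁ → ℝ)) (X2 : ℕ → Set (Fin n₂ → ℝ))
    (hX10 : X1 0 = s₁) (hX20 : X2 0 = s₂)
    (hX1k : ∀ k, X1 (k + 1) =
      {z | ∃ x ∈ X1 k, ∃ y ∈ R₂ε, z = f₁ x y (π₁ (k + 1))})
    (hX2k : ∀ k, X2 (k + 1) =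
      {z | ∃ x ∈ R₁ε, ∃ y ∈ X2 k, z = f₂ x y (π₂ (k + 1))})
    (hmid1 : ∀ k, 1 ≤ k → k ≤ ℓ - 1 → X1 k ⊆ R₁ε)
    (hmid2 : ∀ k, 1 ≤ k → k ≤ ℓ - 1 → X2 k ⊆ R₂ε)
    (hend1 : X1 ℓ ⊆ R₁) (hend2 : X2 ℓ ⊆ R₂) :
    ∀ x₁ ∈ s₁, ∀ x₂ ∈ s₂,
      ∀ traj : ℕ → (Fin n₁ → ℝ) × (Fin n₂ → ℝ),
        traj 0 = (x₁, x₂) →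
        (∀ k, traj (k + 1) =
          (f₁ (traj k).1 (traj k).2 (π₁ (k + 1)),
           f₂ (traj k).1 (traj k).2 (π₂ (k + 1)))) →
        (∀ k ≤ ℓ, (traj k).1 ∈ X1 k ∧ (traj k).2 ∈ X2 k) ∧
        (traj ℓ).1 ∈ R₁ ∧ (traj ℓ).2 ∈ R₂ := by
  intro x₁ hx₁ x₂ hx₂ traj h0 hstep
  have hin1 := subset_of_lt_of_subset_zero (hX10 ▸ hs₁.trans hR₁) hmid1
  have hin2 := subset_of_lt_of_subset_zero (hX20 ▸ hs₂.trans hR₂) hmid2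
  have hmem := coupled_traj_mem_approx hX1k hX2k hin1 hin2 traj
    (by rw [h0, hX10]; exact hx₁) (by rw [h0, hX20]; exact hx₂) hstep
  exact ⟨hmem, hend1 (hmem ℓ le_rfl).1, hend2 (hmem ℓ le_rfl).2⟩

/-- For coupled dynamics, if the approximate sequences (using the
inflated sets as over-approximations of the other component) stay in the inflated
sets at intermediate steps and end inside R₁, R₂, then every true joint trajectory
starting in s₁ × s₂ has its components inside the approximate sequences at every
step, and its final state lies in R₁ × R₂. -/
theorem stmt8 {n₁ n₂ : ℕ} {U₁ U₂ : Type*}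
    (f₁ : (Fin n₁ → ℝ) → (Fin n₂ → ℝ) → U₁ → (Fin n₁ → ℝ))
    (f₂ : (Fin n₁ → ℝ) → (Fin n₂ → ℝ) → U₂ → (Fin n₂ → ℝ))
    (R₁ R₁ε s₁ : Set (Fin n₁ → ℝ)) (R₂ R₂ε s₂ : Set (Fin n₂ → ℝ))
    (hR₁ : R₁ ⊆ R₁ε) (hR₂ : R₂ ⊆ R₂ε)
    (hs₁ : s₁ ⊆ R₁) (hs₂ : s₂ ⊆ R₂)
    (π₁ : ℕ → U₁) (π₂ : ℕ → U₂) (ℓ : ℕ) (hℓ : 1 ≤ ℓ)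
    (X1 : ℕ → Set (Fin n₁ → ℝ)) (X2 : ℕ → Set (Fin n₂ → ℝ))
    (hX10 : X1 0 = s₁) (hX20 : X2 0 = s₂)
    (hX1k : ∀ k, X1 (k + 1) =
      {z | ∃ x ∈ X1 k, ∃ y ∈ R₂ε, z = f₁ x y (π₁ (k + 1))})
    (hX2k : ∀ k, X2 (k + 1) =
      {z | ∃ x ∈ R₁ε, ∃ y ∈ X2 k, z = f₂ x y (π₂ (k + 1))})
    (hmid1 : ∀ k, 1 ≤ k → k ≤ ℓ - 1 → X1 k ⊆ R₁ε)
    (hmid2 : ∀ k, 1 ≤ k → k ≤ ℓ - 1 → X2 k ⊆ R₂ε)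
    (hend1 : X1 ℓ ⊆ R₁) (hend2 : X2 ℓ ⊆ R₂) :
    ∀ x₁ ∈ s₁, ∀ x₂ ∈ s₂,
      ∀ traj : ℕ → (Fin n₁ → ℝ) × (Fin n₂ → ℝ),
        traj 0 = (x₁, x₂) →
        (∀ k, traj (k + 1) =
          (f₁ (traj k).1 (traj k).2 (π₁ (k + 1)),
           f₂ (traj k).1 (traj k).2 (π₂ (k + 1)))) →
        (∀ k ≤ ℓ, (traj k).1 ∈ X1 k ∧ (traj k).2 ∈ X2 k) ∧
        (traj ℓ).1 ∈ R₁ ∧ (traj ℓ).2 ∈ R₂ :=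
  stmt8_general f₁ f₂ R₁ R₁ε s₁ R₂ R₂ε s₂ hR₁ hR₂ hs₁ hs₂ π₁ π₂ ℓ X1 X2 hX10 hX20 hX1k hX2k hmid1
    hmid2 hend1 hend2
end

section
/- If A is an index set and for each i ∈ A a pattern length ℓᵢ ∈ {1, ..., K} and sets satisfy f(r_i, π_i) ⊆ R with |π_i| = ℓᵢ, and additionally every state reached at intermediate times stays in an inflated set R^ε, then any trajectory starting in R = ⋃ r_i under the induced switching control stays in R^ε at every discrete time t ∈ ℕ and visits R at an infinite, unbounded set of times. -/
/-!
The controller keeps a phase `(x, k)`: `x` is the last visit to `R` and `k` controls of the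
pattern assigned to `x` have been applied since. Because patterns are nonempty and map their tile
back into `R`, the phase cycles through `k = 0, 1, …, |π| - 1` and then restarts at a new point of
`R`, so `R` is visited infinitely often; between visits the state is the image of a tile under a
prefix of its pattern, which lies in `Rε`.
-/

namespace PatternSwitching

variable {X U : Type*} (f : X → U → X) (plan : X → List U)

def advance (s : X × ℕ) : X × ℕ :=
  if s.2 + 1 < (plan s.1).length then (s.1, s.2 + 1) else ((plan s.1).foldl f s.1, 0)

def phase (x₀ : X) : ℕ → X × ℕ
  | 0 => (x₀, 0)
  | t + 1 => advance f plan (phase x₀ t)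

def trajectory (x₀ : X) (t : ℕ) : X :=
  ((plan (phase f plan x₀ t).1).take (phase f plan x₀ t).2).foldl f (phase f plan x₀ t).1

def control (u₀ : U) (x₀ : X) (t : ℕ) : U :=
  (plan (phase f plan x₀ t).1).getD (phase f plan x₀ t).2 u₀

variable {f plan}

theorem phase_add {x₀ x : X} {t k : ℕ} (ht : phase f plan x₀ t = (x, k)) :
    ∀ {j : ℕ}, k + j < (plan x).length → phase f plan x₀ (t + j) = (x, k + j)
  | 0, _ => ht
  | j + 1, hj => by
    rw [← add_assoc, phase, phase_add ht (by omega), advance,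
      if_pos (by simpa [add_assoc] using hj)]
    rfl

variable {R : Set X} {x₀ : X}

theorem phase_mem (hplan : ∀ x ∈ R, plan x ≠ []) (hreturn : ∀ x ∈ R, (plan x).foldl f x ∈ R)
    (hx₀ : x₀ ∈ R) (t : ℕ) :
    (phase f plan x₀ t).1 ∈ R ∧ (phase f plan x₀ t).2 < (plan (phase f plan x₀ t).1).length := by
  induction t with
  | zero => exact ⟨hx₀, List.length_pos_iff.mpr (hplan x₀ hx₀)⟩
  | succ t ih =>
    obtain ⟨hx, -⟩ := ih
    rw [phase, advance]
    split_ifs with h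
    · exact ⟨hx, h⟩
    · exact ⟨hreturn _ hx, List.length_pos_iff.mpr (hplan _ (hreturn _ hx))⟩

theorem exists_phase_snd_eq_zero (hplan : ∀ x ∈ R, plan x ≠ [])
    (hreturn : ∀ x ∈ R, (plan x).foldl f x ∈ R) (hx₀ : x₀ ∈ R) (T : ℕ) :
    ∃ t, T ≤ t ∧ (phase f plan x₀ t).2 = 0 := by
  rcases hT : phase f plan x₀ T with ⟨x, k⟩
  have hk := (phase_mem hplan hreturn hx₀ T).2
  simp only [hT] at hk
  have hlast := phase_add hT (j := (plan x).length - 1 - k) (by omega)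
  refine ⟨T + ((plan x).length - 1 - k) + 1, by omega, ?_⟩
  rw [phase, hlast, advance, if_neg (by simp only; omega)]

theorem trajectory_succ (hplan : ∀ x ∈ R, plan x ≠ []) (hreturn : ∀ x ∈ R, (plan x).foldl f x ∈ R)
    (hx₀ : x₀ ∈ R) (u₀ : U) (t : ℕ) :
    trajectory f plan x₀ (t + 1) = f (trajectory f plan x₀ t) (control f plan u₀ x₀ t) := by
  rcases ht : phase f plan x₀ t with ⟨x, k⟩
  have hk := (phase_mem hplan hreturn hx₀ t).2
  simp only [ht] at hk
  simp only [trajectory, control, phase, ht, advance, List.getD_eq_getElem _ _ hk]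
  rw [← List.foldl_concat f, List.take_concat_get']
  split_ifs with h
  · rfl
  · rw [List.take_zero, List.foldl_nil, show k + 1 = (plan x).length by omega, List.take_length]

theorem exists_trajectory (hplan : ∀ x ∈ R, plan x ≠ [])
    (hreturn : ∀ x ∈ R, (plan x).foldl f x ∈ R) (hx₀ : x₀ ∈ R) :
    ∃ (traj : ℕ → X) (u : ℕ → U), traj 0 = x₀ ∧ (∀ t, traj (t + 1) = f (traj t) (u t)) ∧
      (∀ t, ∃ x ∈ R, ∃ p, p <+: plan x ∧ traj t = p.foldl f x) ∧
      ∀ T, ∃ t, T ≤ t ∧ traj t ∈ R := by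
  obtain ⟨u₀, -⟩ := List.exists_mem_of_ne_nil _ (hplan x₀ hx₀)
  refine ⟨trajectory f plan x₀, control f plan u₀ x₀, rfl,
    trajectory_succ hplan hreturn hx₀ u₀, fun t => ?_, fun T => ?_⟩
  · exact ⟨_, (phase_mem hplan hreturn hx₀ t).1, _, List.take_prefix _ _, rfl⟩
  · obtain ⟨t, hTt, hk⟩ := exists_phase_snd_eq_zero hplan hreturn hx₀ T
    refine ⟨t, hTt, ?_⟩
    rw [trajectory, hk, List.take_zero, List.foldl_nil]
    exact (phase_mem hplan hreturn hx₀ t).1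

end PatternSwitching

theorem stmt15_general {n : ℕ} {U : Type*} {I : Type*}
    (f : (Fin n → ℝ) → U → (Fin n → ℝ))
    (R Rε : Set (Fin n → ℝ))
    (r : I → Set (Fin n → ℝ)) (hcov : R = ⋃ i, r i)
    (K : ℕ) (π : I → List U)
    (hlen : ∀ i, 1 ≤ (π i).length ∧ (π i).length ≤ K)
    (hctrl : ∀ i, ∀ x ∈ r i, (π i).foldl f x ∈ R)
    (hpre : ∀ i, ∀ π' : List U, π' <+: π i → ∀ x ∈ r i, π'.foldl f x ∈ Rε) :
    ∀ x₀ ∈ R, ∃ (traj : ℕ → (Fin n → ℝ)) (u : ℕ → U),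
      traj 0 = x₀ ∧
      (∀ t, traj (t + 1) = f (traj t) (u t)) ∧
      (∀ t, traj t ∈ Rε) ∧
      (∀ T : ℕ, ∃ t, T ≤ t ∧ traj t ∈ R) := by
  intro x₀ hx₀
  have hcover : ∀ x ∈ R, ∃ i, x ∈ r i := fun x hx => Set.mem_iUnion.mp (hcov ▸ hx)
  obtain ⟨i₀, -⟩ := hcover x₀ hx₀
  have : Nonempty I := ⟨i₀⟩
  let tile : (Fin n → ℝ) → I := fun x => Classical.epsilon fun i => x ∈ r i
  have mem_tile : ∀ x ∈ R, x ∈ r (tile x) := fun x hx => Classical.epsilon_spec (hcover x hx)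
  obtain ⟨traj, u, h0, hstep, hprefix, hvisit⟩ :=
    PatternSwitching.exists_trajectory (plan := fun x => π (tile x))
      (fun _ _ => List.ne_nil_of_length_pos (hlen _).1)
      (fun x hx => hctrl _ x (mem_tile x hx)) hx₀
  refine ⟨traj, u, h0, hstep, fun t => ?_, hvisit⟩
  obtain ⟨x, hx, p, hp, htraj⟩ := hprefix t
  exact htraj ▸ hpre _ p hp x (mem_tile x hx)

/-- If each tile r i of a finite cover of R has a pattern π i of
length between 1 and K with f(r i, π i) ⊆ R, and every prefix of π i keeps r i
inside the inflated set Rε ⊇ R, then from any initial state in R there is a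
controlled trajectory (obtained by concatenating the chosen patterns) that stays
in Rε at every time and visits R at an unbounded set of times. -/
theorem stmt15 {n : ℕ} {U : Type*} [Fintype U] {I : Type*} [Fintype I]
    (f : (Fin n → ℝ) → U → (Fin n → ℝ))
    (R Rε : Set (Fin n → ℝ)) (hRRε : R ⊆ Rε)
    (r : I → Set (Fin n → ℝ)) (hcov : R = ⋃ i, r i)
    (K : ℕ) (π : I → List U)
    (hlen : ∀ i, 1 ≤ (π i).length ∧ (π i).length ≤ K)
    (hctrl : ∀ i, ∀ x ∈ r i, (π i).foldl f x ∈ R)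
    (hpre : ∀ i, ∀ π' : List U, π' <+: π i → ∀ x ∈ r i, π'.foldl f x ∈ Rε) :
    ∀ x₀ ∈ R, ∃ (traj : ℕ → (Fin n → ℝ)) (u : ℕ → U),
      traj 0 = x₀ ∧
      (∀ t, traj (t + 1) = f (traj t) (u t)) ∧
      (∀ t, traj t ∈ Rε) ∧
      (∀ T : ℕ, ∃ t, T ≤ t ∧ traj t ∈ R) :=
  stmt15_general f R Rε r hcov K π hlen hctrl hpre
end
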